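/- arXiv:1604.00451 — 2 statements merged into one kernel-verified Lean document; each statement's English description precedes it below -/
import Mathlib

section
/- In the ordinary case (additive formal group law), for a vector bundle splitting argument stated algebraically: for any sequence of non-negative integers I = (I₁,…,I_q) and J = (J₁,…,J_{n−q}) with juxtaposition IJ, the partial symmetrization over S_n/(S_q × S_{n−q}) of the product (x₁⋯x_q)^{n−q} s^L_I(x₁,…,x_q) s^L_J(x_{q+1},…,x_n) divided by Π_{1≤i≤q, q+1≤j≤n}(x_i +_L x̄_j) equals s^L_{IJ}(x₁,…,x_n). -/
/-!
Write `T_I(y)` for the summand `y^{I+ρ} / Π_{i<j}(y_i +_L ȳ_j)` of `s^L_I`, so that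
`s^L_I(y) = Σ_{w} T_I(y ∘ w)`. Splitting the exponents `IJ + ρ_{n-1}` and the triangle of
pairs `i < j` along the block decomposition `n = q + r` gives
`T_{IJ}(y, z) = (y₁⋯y_q)^r · T_I(y) · T_J(z) / Π_{i,j}(y_i +_L z̄_j)`,
whose extra factors are `S_q × S_r`-invariant. Hence the `w`-th summand of the left-hand
side is `Σ_{(σ,τ) ∈ S_q × S_r} T_{IJ}(x ∘ w(σ × τ))`, and summing over `w ∈ S_n` counts every
summand of `s^L_{IJ}(x)` exactly `q! r!` times.
-/

/-- The universal Schur function of a sequence `I` of non-negative integers: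
`s^L_I(x_m) = Σ_{w∈S_m} w·( x^{I+ρ_{m−1}} / Π_{1≤i<j≤m}(x_i +_L x̄_j) )`, where `F` is
the formal sum `+_L` and `inv` the formal inverse of the formal group law, evaluated in
an ambient field `K`. -/
noncomputable def universalSchur {K : Type*} [Field K] (F : K → K → K) (inv : K → K)
    {m : ℕ} (x : Fin m → K) (I : Fin m → ℕ) : K :=
  ∑ w : Equiv.Perm (Fin m),
    (∏ i : Fin m, x (w i) ^ (I i + (m - 1 - (i : ℕ)))) /
      ∏ i : Fin m, ∏ j ∈ Finset.univ.filter (fun j => i < j), F (x (w i)) (inv (x (w j)))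

open Finset

section Reindexing

theorem sum_sum_mul_right_eq_card_smul {G H M : Type*} [Group G] [Fintype G] [Fintype H]
    [AddCommMonoid M] (φ : H → G) (f : G → M) :
    ∑ g, ∑ h, f (g * φ h) = Fintype.card H • ∑ g, f g := by
  rw [Finset.sum_comm]
  calc ∑ h, ∑ g, f (g * φ h) = ∑ _h : H, ∑ g, f g :=
        sum_congr rfl fun h _ => Equiv.sum_comp (Equiv.mulRight (φ h)) f
    _ = _ := by rw [sum_const, card_univ]

variable {q r : ℕ}

noncomputable def permAppend (σ : Equiv.Perm (Fin q)) (τ : Equiv.Perm (Fin r)) :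
    Equiv.Perm (Fin (q + r)) :=
  finSumFinEquiv.permCongr (σ.sumCongr τ)

theorem comp_permAppend {α : Type*} (y : Fin (q + r) → α) (σ : Equiv.Perm (Fin q))
    (τ : Equiv.Perm (Fin r)) :
    y ∘ permAppend σ τ = Fin.append (y ∘ Fin.castAdd r ∘ σ) (y ∘ Fin.natAdd q ∘ τ) := by
  funext k
  refine Fin.addCases (fun i => ?_) (fun j => ?_) k <;>
    simp [permAppend, Equiv.permCongr_apply]

theorem prod_filter_lt_finAdd {M : Type*} [CommMonoid M] (f : Fin (q + r) → Fin (q + r) → M) :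
    ∏ i, ∏ j ∈ univ.filter (i < ·), f i j =
      (∏ i : Fin q, ∏ j ∈ univ.filter (i < ·), f (Fin.castAdd r i) (Fin.castAdd r j)) *
        (∏ i : Fin r, ∏ j ∈ univ.filter (i < ·), f (Fin.natAdd q i) (Fin.natAdd q j)) *
        ∏ i : Fin q, ∏ j : Fin r, f (Fin.castAdd r i) (Fin.natAdd q j) := by
  simp only [prod_filter, Fin.prod_univ_add, Fin.lt_def, Fin.val_castAdd, Fin.val_natAdd]
  have left_lt_right (i : Fin q) (j : Fin r) : (i : ℕ) < q + j := by omega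
  have right_not_lt_left (i : Fin r) (j : Fin q) : ¬ q + (i : ℕ) < j := by omega
  simp only [left_lt_right, right_not_lt_left, if_true, if_false, prod_const_one, one_mul,
    add_lt_add_iff_left, prod_mul_distrib]
  exact mul_right_comm _ _ _

theorem prod_append_pow_add_rho {M : Type*} [CommMonoid M] (y : Fin q → M) (z : Fin r → M)
    (I : Fin q → ℕ) (J : Fin r → ℕ) :
    ∏ k : Fin (q + r), Fin.append y z k ^ (Fin.append I J k + (q + r - 1 - (k : ℕ))) =
      (∏ i, y i) ^ r * (∏ i, y i ^ (I i + (q - 1 - (i : ℕ)))) *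
        ∏ j, z j ^ (J j + (r - 1 - (j : ℕ))) := by
  have left_exponent (i : Fin q) : I i + (q + r - 1 - i) = I i + (q - 1 - i) + r := by omega
  have right_exponent (j : Fin r) : J j + (q + r - 1 - (q + j)) = J j + (r - 1 - j) := by omega
  simp only [Fin.prod_univ_add, Fin.append_left, Fin.append_right, Fin.val_castAdd,
    Fin.val_natAdd, left_exponent, right_exponent]
  simp only [pow_add, prod_mul_distrib, prod_pow]
  ac_rfl

end Reindexing

section Schur

variable {K : Type*} [Field K] (F : K → K → K) (inv : K → K)

noncomputable def schurTerm {m : ℕ} (y : Fin m → K) (I : Fin m → ℕ) : K :=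
  (∏ i, y i ^ (I i + (m - 1 - (i : ℕ)))) / ∏ i, ∏ j ∈ univ.filter (i < ·), F (y i) (inv (y j))

theorem universalSchur_eq_sum_schurTerm {m : ℕ} (x : Fin m → K) (I : Fin m → ℕ) :
    universalSchur F inv x I = ∑ w : Equiv.Perm (Fin m), schurTerm F inv (x ∘ w) I :=
  rfl

variable {q r : ℕ}

theorem schurTerm_append (y : Fin q → K) (z : Fin r → K) (I : Fin q → ℕ) (J : Fin r → ℕ) :
    schurTerm F inv (Fin.append y z) (Fin.append I J) =
      (∏ i, y i) ^ r * schurTerm F inv y I * schurTerm F inv z J /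
        ∏ i, ∏ j, F (y i) (inv (z j)) := by
  rw [schurTerm, schurTerm, schurTerm, prod_append_pow_add_rho,
    prod_filter_lt_finAdd (fun i j => F (Fin.append y z i) (inv (Fin.append y z j)))]
  simp only [Fin.append_left, Fin.append_right, div_eq_mul_inv, mul_inv]
  ring

theorem schurTerm_comp_permAppend (y : Fin (q + r) → K) (I : Fin q → ℕ) (J : Fin r → ℕ)
    (σ : Equiv.Perm (Fin q)) (τ : Equiv.Perm (Fin r)) :
    schurTerm F inv (y ∘ permAppend σ τ) (Fin.append I J) =
      (∏ i, y (Fin.castAdd r i)) ^ r * schurTerm F inv (y ∘ Fin.castAdd r ∘ σ) I *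
          schurTerm F inv (y ∘ Fin.natAdd q ∘ τ) J /
        ∏ i, ∏ j, F (y (Fin.castAdd r i)) (inv (y (Fin.natAdd q j))) := by
  rw [comp_permAppend, schurTerm_append]
  simp only [Function.comp_apply, Equiv.prod_comp σ (fun i => y (Fin.castAdd r i)),
    Equiv.prod_comp σ (fun i => ∏ j, F (y (Fin.castAdd r i)) (inv (y (Fin.natAdd q (τ j)))))]
  congr 1
  exact prod_congr rfl fun i _ =>
    Equiv.prod_comp τ (fun j => F (y (Fin.castAdd r i)) (inv (y (Fin.natAdd q j))))

end Schur

theorem universalSchur_juxtaposition_general {K : Type*} [Field K] [CharZero K]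
    (F : K → K → K) (inv : K → K) (q r : ℕ) (x : Fin (q + r) → K)
    (I : Fin q → ℕ) (J : Fin r → ℕ) :
    ((Nat.factorial q * Nat.factorial r : ℕ) : K)⁻¹ *
      ∑ w : Equiv.Perm (Fin (q + r)),
        ((∏ i : Fin q, x (w (Fin.castAdd r i))) ^ r *
            universalSchur F inv (fun i : Fin q => x (w (Fin.castAdd r i))) I *
            universalSchur F inv (fun j : Fin r => x (w (Fin.natAdd q j))) J) /
          ∏ i : Fin q, ∏ j : Fin r,
            F (x (w (Fin.castAdd r i))) (inv (x (w (Fin.natAdd q j))))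
    = universalSchur F inv x (Fin.append I J) := by
  have summand_eq (w : Equiv.Perm (Fin (q + r))) :
      ((∏ i : Fin q, x (w (Fin.castAdd r i))) ^ r *
            universalSchur F inv (fun i : Fin q => x (w (Fin.castAdd r i))) I *
            universalSchur F inv (fun j : Fin r => x (w (Fin.natAdd q j))) J) /
          ∏ i : Fin q, ∏ j : Fin r, F (x (w (Fin.castAdd r i))) (inv (x (w (Fin.natAdd q j)))) =
        ∑ p : Equiv.Perm (Fin q) × Equiv.Perm (Fin r),
          schurTerm F inv (x ∘ ⇑(w * permAppend p.1 p.2)) (Fin.append I J) := by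
    simp only [Fintype.sum_prod_type_right, Equiv.Perm.coe_mul, ← Function.comp_assoc,
      schurTerm_comp_permAppend, universalSchur_eq_sum_schurTerm, mul_sum, sum_mul, sum_div]
    rfl
  have hfact : ((q.factorial * r.factorial : ℕ) : K) ≠ 0 := Nat.cast_ne_zero.mpr (by positivity)
  rw [sum_congr rfl fun w _ => summand_eq w, sum_sum_mul_right_eq_card_smul
      (fun p : Equiv.Perm (Fin q) × Equiv.Perm (Fin r) => permAppend p.1 p.2)
      (fun u => schurTerm F inv (x ∘ ⇑u) (Fin.append I J)),
    universalSchur_eq_sum_schurTerm, Fintype.card_prod, Fintype.card_perm, Fintype.card_perm,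
    Fintype.card_fin, Fintype.card_fin, nsmul_eq_mul, inv_mul_cancel_left₀ hfact]

/-- For sequences of non-negative integers `I = (I₁,…,I_q)` and `J = (J₁,…,J_r)` with
juxtaposition `IJ`, the partial symmetrization over `S_n/(S_q × S_r)` (realized as
`(1/(q!·r!)) Σ_{w∈S_n}` of the `(S_q × S_r)`-invariant summand, `n = q + r`) of the
product `(x₁⋯x_q)^r · s^L_I(x₁,…,x_q) · s^L_J(x_{q+1},…,x_n)` divided by
`Π_{1≤i≤q<j≤n}(x_i +_L x̄_j)` equals `s^L_{IJ}(x₁,…,x_n)`. -/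
theorem universalSchur_juxtaposition {K : Type*} [Field K] [CharZero K]
    (F : K → K → K) (inv : K → K) (q r : ℕ) (x : Fin (q + r) → K)
    (hx : Function.Injective x)
    (hne : ∀ i j : Fin (q + r), i ≠ j → F (x i) (inv (x j)) ≠ 0)
    (I : Fin q → ℕ) (J : Fin r → ℕ) :
    ((Nat.factorial q * Nat.factorial r : ℕ) : K)⁻¹ *
      ∑ w : Equiv.Perm (Fin (q + r)),
        ((∏ i : Fin q, x (w (Fin.castAdd r i))) ^ r *
            universalSchur F inv (fun i : Fin q => x (w (Fin.castAdd r i))) I *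
            universalSchur F inv (fun j : Fin r => x (w (Fin.natAdd q j))) J) /
          ∏ i : Fin q, ∏ j : Fin r,
            F (x (w (Fin.castAdd r i))) (inv (x (w (Fin.natAdd q j))))
    = universalSchur F inv x (Fin.append I J) :=
  universalSchur_juxtaposition_general F inv q r x I J
end

section
/- Multiplying a universal Schur function by the c-th power of the product of all variables shifts the index: (x₁⋯x_n)^c · s^L_I(x₁,…,x_n) = s^L_{I+(c^n)}(x₁,…,x_n) for any sequence I of non-negative integers and any non-negative integer c, where I+(c^n) adds c to every entry of I. -/
theorem prod_pow_mul_prod_perm_pow {ι M : Type*} [Fintype ι] [CommMonoid M]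
    (w : Equiv.Perm ι) (x : ι → M) (e : ι → ℕ) (c : ℕ) :
    (∏ i, x i) ^ c * ∏ i, x (w i) ^ e i = ∏ i, x (w i) ^ (e i + c) := by
  rw [← Equiv.prod_comp w x, ← Finset.prod_pow, ← Finset.prod_mul_distrib]
  exact Finset.prod_congr rfl fun i _ => by rw [pow_add, mul_comm]

/-- Multiplying a universal Schur function by the `c`-th power of the product of all
variables shifts the index: `(x₁⋯x_n)^c · s^L_I(x_n) = s^L_{I+(c^n)}(x_n)` for any
sequence `I` of non-negative integers and any `c ≥ 0`. -/
theorem universalSchur_mul_prod_pow {K : Type*} [Field K] (F : K → K → K) (inv : K → K)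
    (n : ℕ) (x : Fin n → K) (I : Fin n → ℕ) (c : ℕ) :
    (∏ i : Fin n, x i) ^ c * universalSchur F inv x I
      = universalSchur F inv x (fun i => I i + c) := by
  simp only [universalSchur, Finset.mul_sum, mul_div_assoc', prod_pow_mul_prod_perm_pow,
    add_right_comm]
end
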